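/- arXiv:1903.08591 — 2 statements merged into one kernel-verified Lean document; each statement's English description precedes it below -/
import Mathlib

section
/- Let f be a piecewise contracting interval map which is injective on each contraction piece and satisfies D ⊂ X̃. Then every atom of generation n ≥ 1 is a nondegenerate compact interval [a,b] with a ≠ b, whose endpoints a, b belong to the union of the forward orbits of the points of D; moreover at least one endpoint belongs to the union of orbits of the lateral limits d_i^± at interior boundary points c_1,...,c_{N-1}. -/
open Filter Topology Set

/-- A piecewise contracting interval map on `X = [c 0, c N]` with contraction pieces
`X_i` delimited by the points `c 0 < c 1 < … < c N`, contraction rate `lam ∈ (0,1)`,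
and `fe i` the (unique) continuous `lam`-Lipschitz extension of `f` restricted to the
`i`-th piece to its closure `[c (i-1), c i]`. The pieces are
`X_1 = [c 0, c 1)`, `X_i = (c (i-1), c i)` for `1 < i < N`, `X_N = (c (N-1), c N]`. -/
structure PCIM where
  N : ℕ
  hN : 2 ≤ N
  c : ℕ → ℝ
  lam : ℝ
  f : ℝ → ℝ
  fe : ℕ → ℝ → ℝ
  hc : StrictMonoOn c (Set.Iic N)
  hlam : lam ∈ Set.Ioo (0 : ℝ) 1
  hmap : Set.MapsTo f (Set.Icc (c 0) (c N)) (Set.Icc (c 0) (c N))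
  hfe_lip : ∀ i, 1 ≤ i → i ≤ N →
    ∀ x ∈ Set.Icc (c (i - 1)) (c i), ∀ y ∈ Set.Icc (c (i - 1)) (c i),
      |fe i x - fe i y| ≤ lam * |x - y|
  hfe_eq : ∀ i, 1 ≤ i → i ≤ N → ∀ x ∈ Set.Ioo (c (i - 1)) (c i), fe i x = f x
  hfe_left : fe 1 (c 0) = f (c 0)
  hfe_right : fe N (c N) = f (c N)

namespace PCIM

variable (P : PCIM)

/-- The phase space `X = [c 0, c N]`. -/
def X : Set ℝ := Set.Icc (P.c 0) (P.c P.N)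

/-- The `i`-th contraction piece (`1 ≤ i ≤ N`). -/
def piece (i : ℕ) : Set ℝ :=
  Set.Ioo (P.c (i - 1)) (P.c i)
    ∪ (if i = 1 then {P.c 0} else (∅ : Set ℝ))
    ∪ (if i = P.N then {P.c P.N} else (∅ : Set ℝ))

/-- `Δ`, the set of interior boundary points of the pieces. -/
def Δ : Set ℝ := {y | ∃ i, 1 ≤ i ∧ i < P.N ∧ y = P.c i}

/-- `X̃ = ⋂ n, f⁻ⁿ(X \ Δ)`: points whose whole forward orbit stays in `X` and avoids `Δ`. -/
def Xt : Set ℝ := {x | ∀ n : ℕ, P.f^[n] x ∈ P.X \ P.Δ}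

/-- Forward orbit of `x`. -/
def orbit (x : ℝ) : Set ℝ := Set.range fun n : ℕ => P.f^[n] x

/-- The ω-limit set of `x`: limits of subsequences of the forward orbit. -/
def omega (x : ℝ) : Set ℝ :=
  {y | ∃ φ : ℕ → ℕ, StrictMono φ ∧
    Filter.Tendsto (fun n => P.f^[φ n] x) Filter.atTop (nhds y)}

/-- `d_i^- = f_i (c_i)`, the left lateral limit of `f` at `c i`. -/
def dminus (i : ℕ) : ℝ := P.fe i (P.c i)

/-- `d_i^+ = f_{i+1} (c_i)`, the right lateral limit of `f` at `c i`. -/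
def dplus (i : ℕ) : ℝ := P.fe (i + 1) (P.c i)

/-- `D⁻ = {d_1^-, …, d_{N-1}^-}`. -/
def Dminus : Set ℝ := {y | ∃ i, 1 ≤ i ∧ i < P.N ∧ y = P.dminus i}

/-- `D⁺ = {d_1^+, …, d_{N-1}^+}`. -/
def Dplus : Set ℝ := {y | ∃ i, 1 ≤ i ∧ i < P.N ∧ y = P.dplus i}

/-- `D`, the set of all one-sided limits of `f` at endpoints of the pieces. -/
def D : Set ℝ := P.Dminus ∪ P.Dplus ∪ {P.fe 1 (P.c 0), P.fe P.N (P.c P.N)}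

/-- `A` is pseudo-invariant: for every `x ∈ A` at least one one-sided limit of `f`
at `x` (i.e. some `fe i x` with `x` in the closure of the `i`-th piece) belongs to `A`. -/
def PseudoInvariant (A : Set ℝ) : Prop :=
  ∀ x ∈ A, ∃ i, 1 ≤ i ∧ i ≤ P.N ∧ x ∈ Set.Icc (P.c (i - 1)) (P.c i) ∧ P.fe i x ∈ A

/-- `F_i(A) = closure (f (A ∩ X_i))`. -/
def Fmap (i : ℕ) (A : Set ℝ) : Set ℝ := closure (P.f '' (A ∩ P.piece i))

/-- For a word `w = [i_1, …, i_n]`, the set `F_{i_n} ∘ … ∘ F_{i_1} (X)`. -/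
def atomOf (w : List ℕ) : Set ℝ := w.foldl (fun S i => P.Fmap i S) P.X

/-- `A` is an atom of generation `n`. -/
def IsAtomGen (n : ℕ) (A : Set ℝ) : Prop :=
  ∃ w : List ℕ, w.length = n ∧ (∀ i ∈ w, 1 ≤ i ∧ i ≤ P.N) ∧
    A = P.atomOf w ∧ A.Nonempty

/-- `Lam n` is `Λ_{n+1}` of the paper: `Λ_1 = closure (f(X \ Δ))`,
`Λ_{n+1} = closure (f(Λ_n \ Δ))`. -/
def Lam (P : PCIM) : ℕ → Set ℝ
  | 0 => closure (P.f '' (P.X \ P.Δ))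
  | n + 1 => closure (P.f '' (P.Lam n \ P.Δ))

/-- The attractor `Λ = ⋂_{n ≥ 1} Λ_n`. -/
def attractor : Set ℝ := ⋂ n : ℕ, P.Lam n

/-- `c i ∈ Δ_lr(x)`: the boundary point `c i` is left-right recurrently visited by the
orbit of `x`. -/
def lrVisited (x : ℝ) (i : ℕ) : Prop :=
  1 ≤ i ∧ i < P.N ∧
  ∃ l r : ℕ → ℕ, StrictMono l ∧ StrictMono r ∧
    (∀ j, P.f^[l j] x ∈ P.piece i) ∧ (∀ j, P.f^[r j] x ∈ P.piece (i + 1)) ∧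
    Filter.Tendsto (fun j => P.f^[l j] x) Filter.atTop (nhds (P.c i)) ∧
    Filter.Tendsto (fun j => P.f^[r j] x) Filter.atTop (nhds (P.c i))

/-- `c i ∈ Δ_lr`: `c i` is left-right recurrently visited by the orbit of some point
of `X̃`. -/
def inΔlr (i : ℕ) : Prop := ∃ x ∈ P.Xt, P.lrVisited x i

/-- The set `Δ_lr ⊆ Δ`. -/
def ΔlrSet : Set ℝ := {y | ∃ i, P.inΔlr i ∧ y = P.c i}

/-- The relation `∼⁺` on `Δ_lr`: `c_i ∼⁺ c_j` iff `c_i = c_j` or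
(`c_i ∈ Δ_lr(d_j^+)` and `c_j ∈ Δ_lr(d_i^+)`). -/
def simP (a b : ℝ) : Prop :=
  a = b ∨ ∃ i j, P.inΔlr i ∧ P.inΔlr j ∧ a = P.c i ∧ b = P.c j ∧
    P.lrVisited (P.dplus j) i ∧ P.lrVisited (P.dplus i) j

/-- The relation `≼⁺` (on representatives): `[c_i] ≼⁺ [c_j]` iff `[c_i] = [c_j]` or
`c_i ∈ Δ_lr(d_j^+)`. -/
def preP (a b : ℝ) : Prop :=
  P.simP a b ∨ ∃ i j, P.inΔlr i ∧ P.inΔlr j ∧ a = P.c i ∧ b = P.c j ∧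
    P.lrVisited (P.dplus j) i

/-- `[c i]` is a minimal class for the partial order `≼⁺`. -/
def MinimalClass (i : ℕ) : Prop :=
  P.inΔlr i ∧ ∀ j, P.inΔlr j → P.preP (P.c j) (P.c i) → P.simP (P.c j) (P.c i)

/-- `f` is injective on each contraction piece. -/
def InjPieces : Prop := ∀ i, 1 ≤ i → i ≤ P.N → Set.InjOn P.f (P.piece i)

/-- `f` is (strictly) increasing on each contraction piece. -/
def IncrPieces : Prop := ∀ i, 1 ≤ i → i ≤ P.N → StrictMonoOn P.f (P.piece i)

/-- `x` is a periodic point of `f`. -/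
def IsPeriodic (x : ℝ) : Prop := ∃ p : ℕ, 1 ≤ p ∧ P.f^[p] x = x

/-- `η` is the itinerary of `x`: `f^[n] x ∈ X_{η n}` for all `n`. -/
def IsItinerary (x : ℝ) (η : ℕ → ℕ) : Prop :=
  ∀ n, 1 ≤ η n ∧ η n ≤ P.N ∧ P.f^[n] x ∈ P.piece (η n)

end PCIM

/-- The word of length `n` of the sequence `η` starting at position `t`. -/
def wordAt (η : ℕ → ℕ) (t n : ℕ) : List ℕ := (List.range n).map fun m => η (t + m)

/-- The complexity function of the sequence `η`: the number of distinct words of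
length `n` occurring in `η`. -/
noncomputable def complexity (η : ℕ → ℕ) (n : ℕ) : ℕ := Set.ncard {w : List ℕ | ∃ t, w = wordAt η t n}

/-! On an interval `[a, b]` the map `F_j` is the image of `[max a c_{j-1}, min b c_j]` under the
continuous extension `f_j`, which is injective on `[c_{j-1}, c_j]` (being continuous there and
injective on the open piece), hence strictly monotone; so atoms stay nondegenerate intervals.
A new endpoint is either `f` of an old endpoint lying in `X_j`, or the lateral limit
`f_j(c_{j-1}) = d_{j-1}^+`, resp. `f_j(c_j) = d_j^-`, when the old interval reaches past that
boundary point. Hence endpoints stay on orbits of `D`, and an endpoint on an orbit of some `d_i^±`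
is either created by the second alternative or inherited through the first (for `X` itself both
endpoints cannot lie in one piece, as `N ≥ 2`). -/

section ContinuousInjective

variable {α δ : Type*} [ConditionallyCompleteLinearOrder α] [DenselyOrdered α]
  [TopologicalSpace α] [OrderTopology α] [LinearOrder δ] [TopologicalSpace δ]
  [OrderClosedTopology δ] {g : α → δ} {p q : α}

theorem StrictMonoOn.Icc_of_Ioo (hc : ContinuousOn g (Icc p q)) (hm : StrictMonoOn g (Ioo p q)) :
    StrictMonoOn g (Icc p q) := by
  intro x hx y hy hxy
  obtain ⟨z, hxz, hzy⟩ := exists_between hxy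
  obtain ⟨w, hzw, hwy⟩ := exists_between hzy
  have hz : z ∈ Ioo p q := ⟨hx.1.trans_lt hxz, (hzw.trans hwy).trans_le hy.2⟩
  have hw : w ∈ Ioo p q := ⟨hz.1.trans hzw, hwy.trans_le hy.2⟩
  have hxz' : g x ≤ g z := by
    refine le_on_closure (s := Ioo p z) (fun t ht ↦ (hm ⟨ht.1, ht.2.trans hz.2⟩ hz ht.2).le)
      ?_ continuousOn_const ?_ <;> rw [closure_Ioo hz.1.ne]
    exacts [hc.mono (Icc_subset_Icc_right hz.2.le), ⟨hx.1, hxz.le⟩]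
  have hwy' : g w ≤ g y := by
    refine le_on_closure (s := Ioo w q) (fun t ht ↦ (hm hw ⟨hw.1.trans ht.1, ht.2⟩ ht.1).le)
      continuousOn_const ?_ ?_ <;> rw [closure_Ioo hw.2.ne]
    exacts [hc.mono (Icc_subset_Icc_left hw.1.le), ⟨hwy.le, hy.2⟩]
  exact hxz'.trans_lt ((hm hz hw hzw).trans_le hwy')

theorem StrictAntiOn.Icc_of_Ioo (hc : ContinuousOn g (Icc p q)) (hm : StrictAntiOn g (Ioo p q)) :
    StrictAntiOn g (Icc p q) :=
  StrictMonoOn.Icc_of_Ioo (δ := δᵒᵈ) hc hm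

theorem ContinuousOn.injOn_Icc_of_injOn_Ioo (hc : ContinuousOn g (Icc p q))
    (hi : InjOn g (Ioo p q)) : InjOn g (Icc p q) := by
  rcases lt_or_ge p q with hpq | hqp
  · rcases (hc.mono Ioo_subset_Icc_self).strictMonoOn_of_injOn_Ioo hpq hi with hm | hm
    exacts [(hm.Icc_of_Ioo hc).injOn, (hm.Icc_of_Ioo hc).injOn]
  · exact (subsingleton_Icc_of_ge hqp).injOn g

theorem ContinuousOn.image_Icc_of_injOn (hpq : p ≤ q) (hc : ContinuousOn g (Icc p q))
    (hi : InjOn g (Icc p q)) : g '' Icc p q = uIcc (g p) (g q) := by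
  rcases hc.strictMonoOn_of_injOn_Icc' hpq hi with hm | hm
  · have hgpq := hm.monotoneOn (left_mem_Icc.2 hpq) (right_mem_Icc.2 hpq) hpq
    rw [hc.image_Icc_of_monotoneOn hpq hm.monotoneOn, uIcc_of_le hgpq]
  · have hgpq := hm.antitoneOn (left_mem_Icc.2 hpq) (right_mem_Icc.2 hpq) hpq
    rw [hc.image_Icc_of_antitoneOn hpq hm.antitoneOn, uIcc_of_ge hgpq]

end ContinuousInjective

theorem closure_image_eq_image_closure_of_subset {X Y : Type*} [TopologicalSpace X]
    [TopologicalSpace Y] [T2Space Y] {g : X → Y} {s t : Set X} (ht : IsCompact (closure t))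
    (hg : ContinuousOn g (closure t)) (hts : t ⊆ s) (hst : s ⊆ closure t) :
    closure (g '' s) = g '' closure t := by
  rw [image_closure_of_isCompact ht hg]
  refine subset_antisymm (closure_minimal ?_ isClosed_closure) (closure_mono (image_mono hts))
  exact (image_mono hst).trans (image_closure_of_isCompact ht hg).subset

namespace PCIM

variable (P : PCIM) {i j : ℕ} {a b x : ℝ}

theorem c_lt_c (hij : i < j) (hj : j ≤ P.N) : P.c i < P.c j :=
  P.hc (mem_Iic.2 (hij.le.trans hj)) (mem_Iic.2 hj) hij

theorem c_le_c_iff (hi : i ≤ P.N) (hj : j ≤ P.N) : P.c i ≤ P.c j ↔ i ≤ j :=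
  P.hc.le_iff_le (mem_Iic.2 hi) (mem_Iic.2 hj)

theorem mem_piece : x ∈ P.piece j ↔
    x ∈ Ioo (P.c (j - 1)) (P.c j) ∨ (j = 1 ∧ x = P.c 0) ∨ (j = P.N ∧ x = P.c P.N) := by
  simp only [piece, mem_union]
  split_ifs <;> simp_all [or_assoc]

theorem piece_subset_Icc (hjN : j ≤ P.N) :
    P.piece j ⊆ Icc (P.c (j - 1)) (P.c j) := by
  intro x hx
  rcases P.mem_piece.1 hx with hx | ⟨rfl, rfl⟩ | ⟨rfl, rfl⟩
  · exact Ioo_subset_Icc_self hx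
  · exact ⟨le_rfl, (P.c_lt_c zero_lt_one hjN).le⟩
  · exact ⟨(P.c_le_c_iff (Nat.sub_le _ _) le_rfl).2 (Nat.sub_le _ _), le_rfl⟩

theorem fe_eq_f (hj1 : 1 ≤ j) (hjN : j ≤ P.N) (hx : x ∈ P.piece j) : P.fe j x = P.f x := by
  rcases P.mem_piece.1 hx with hx | ⟨rfl, rfl⟩ | ⟨rfl, rfl⟩
  exacts [P.hfe_eq j hj1 hjN x hx, P.hfe_left, P.hfe_right]

theorem continuousOn_fe (hj1 : 1 ≤ j) (hjN : j ≤ P.N) :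
    ContinuousOn (P.fe j) (Icc (P.c (j - 1)) (P.c j)) := by
  have hlip : LipschitzOnWith ⟨P.lam, P.hlam.1.le⟩ (P.fe j) (Icc (P.c (j - 1)) (P.c j)) :=
    LipschitzOnWith.of_dist_le_mul fun x hx y hy ↦ P.hfe_lip j hj1 hjN x hx y hy
  exact hlip.continuousOn

theorem injOn_fe (hinj : P.InjPieces) (hj1 : 1 ≤ j) (hjN : j ≤ P.N) :
    InjOn (P.fe j) (Icc (P.c (j - 1)) (P.c j)) := by
  refine (P.continuousOn_fe hj1 hjN).injOn_Icc_of_injOn_Ioo fun x hx y hy hxy ↦ ?_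
  have hx' : x ∈ P.piece j := P.mem_piece.2 (Or.inl hx)
  have hy' : y ∈ P.piece j := P.mem_piece.2 (Or.inl hy)
  rw [P.fe_eq_f hj1 hjN hx', P.fe_eq_f hj1 hjN hy'] at hxy
  exact hinj j hj1 hjN hx' hy' hxy

theorem not_c_zero_mem_piece_and_c_N_mem_piece (hjN : j ≤ P.N) :
    ¬(P.c 0 ∈ P.piece j ∧ P.c P.N ∈ P.piece j) := by
  rintro ⟨h0, hN⟩
  have h0' := (P.c_le_c_iff (Nat.sub_le_of_le_add (by omega)) (Nat.zero_le _)).1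
    (P.piece_subset_Icc hjN h0).1
  have hN' := (P.c_le_c_iff le_rfl hjN).1 (P.piece_subset_Icc hjN hN).2
  have := P.hN
  omega

theorem Fmap_subset_X (hjN : j ≤ P.N) (S : Set ℝ) : P.Fmap j S ⊆ P.X := by
  refine closure_minimal ?_ isClosed_Icc
  rintro _ ⟨x, ⟨-, hx⟩, rfl⟩
  refine P.hmap (Icc_subset_Icc ?_ ?_ (P.piece_subset_Icc hjN hx))
  exacts [(P.c_le_c_iff (Nat.zero_le _) ((Nat.sub_le _ _).trans hjN)).2 (Nat.zero_le _),
    (P.c_le_c_iff hjN le_rfl).2 hjN]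

def OnOrbit (S : Set ℝ) (x : ℝ) : Prop := ∃ d ∈ S, x ∈ P.orbit d

theorem onOrbit_of_mem {S : Set ℝ} (hx : x ∈ S) : P.OnOrbit S x := ⟨x, hx, 0, rfl⟩

theorem OnOrbit.f {S : Set ℝ} (hx : P.OnOrbit S x) : P.OnOrbit S (P.f x) := by
  obtain ⟨d, hd, k, rfl⟩ := hx
  exact ⟨d, hd, k + 1, Function.iterate_succ_apply' _ _ _⟩

theorem f_c_zero_mem_D : P.f (P.c 0) ∈ P.D :=
  P.hfe_left ▸ mem_union_right _ (mem_insert _ _)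

theorem f_c_N_mem_D : P.f (P.c P.N) ∈ P.D :=
  P.hfe_right ▸ mem_union_right _ (mem_insert_of_mem _ rfl)

def HasOrbitEndpoints (a b : ℝ) : Prop :=
  P.OnOrbit P.D a ∧ P.OnOrbit P.D b ∧
    (P.OnOrbit (P.Dminus ∪ P.Dplus) a ∨ P.OnOrbit (P.Dminus ∪ P.Dplus) b)

theorem HasOrbitEndpoints.symm (h : P.HasOrbitEndpoints a b) : P.HasOrbitEndpoints b a :=
  ⟨h.2.1, h.1, h.2.2.symm⟩

theorem exists_Icc_eq_uIcc {x y : ℝ} (hxy : x ≠ y) (h : P.HasOrbitEndpoints x y) :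
    ∃ a b, a < b ∧ uIcc x y = Icc a b ∧ P.HasOrbitEndpoints a b := by
  rcases hxy.lt_or_gt with hlt | hlt
  exacts [⟨x, y, hlt, uIcc_of_le hlt.le, h⟩, ⟨y, x, hlt, uIcc_of_ge hlt.le, h.symm⟩]

theorem fe_max_eq (hj1 : 1 ≤ j) (hjN : j ≤ P.N) (ha : P.c 0 ≤ a) (haj : a < P.c j) :
    (a ∈ P.piece j ∧ P.fe j (max a (P.c (j - 1))) = P.f a) ∨
      (2 ≤ j ∧ P.fe j (max a (P.c (j - 1))) = P.dplus (j - 1)) := by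
  by_cases hmem : a ∈ P.piece j
  · left
    rw [max_eq_left (P.piece_subset_Icc hjN hmem).1, P.fe_eq_f hj1 hjN hmem]
    exact ⟨hmem, rfl⟩
  · right
    have hap : a ≤ P.c (j - 1) := not_lt.1 fun h ↦ hmem (P.mem_piece.2 (Or.inl ⟨h, haj⟩))
    have hj : j ≠ 1 := by
      rintro rfl
      exact hmem (P.mem_piece.2 (Or.inr (Or.inl ⟨rfl, le_antisymm hap ha⟩)))
    rw [max_eq_right hap, dplus, Nat.sub_add_cancel hj1]
    exact ⟨by omega, rfl⟩

theorem fe_min_eq (hj1 : 1 ≤ j) (hjN : j ≤ P.N) (hb : b ≤ P.c P.N) (hjb : P.c (j - 1) < b) :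
    (b ∈ P.piece j ∧ P.fe j (min b (P.c j)) = P.f b) ∨
      (j < P.N ∧ P.fe j (min b (P.c j)) = P.dminus j) := by
  by_cases hmem : b ∈ P.piece j
  · left
    rw [min_eq_left (P.piece_subset_Icc hjN hmem).2, P.fe_eq_f hj1 hjN hmem]
    exact ⟨hmem, rfl⟩
  · right
    have hbq : P.c j ≤ b := not_lt.1 fun h ↦ hmem (P.mem_piece.2 (Or.inl ⟨hjb, h⟩))
    have hj : j ≠ P.N := by
      rintro rfl
      exact hmem (P.mem_piece.2 (Or.inr (Or.inr ⟨rfl, le_antisymm hb hbq⟩)))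
    rw [min_eq_right hbq]
    exact ⟨lt_of_le_of_ne hjN hj, rfl⟩

theorem max_lt_min_of_inter_piece_nonempty (hj1 : 1 ≤ j) (hjN : j ≤ P.N) (ha : P.c 0 ≤ a)
    (hb : b ≤ P.c P.N) (hab : a < b) (hne : (Icc a b ∩ P.piece j).Nonempty) :
    max a (P.c (j - 1)) < min b (P.c j) := by
  obtain ⟨x, hx, hxj⟩ := hne
  refine max_lt (lt_min hab ?_) (lt_min ?_ (P.c_lt_c (by omega) hjN))
  · rcases P.mem_piece.1 hxj with hxj | ⟨rfl, rfl⟩ | ⟨rfl, rfl⟩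
    · exact hx.1.trans_lt hxj.2
    · exact hx.1.trans_lt (P.c_lt_c zero_lt_one hjN)
    · exact hab.trans_le hb
  · rcases P.mem_piece.1 hxj with hxj | ⟨rfl, rfl⟩ | ⟨rfl, rfl⟩
    · exact hxj.1.trans_le hx.2
    · exact ha.trans_lt hab
    · exact (P.c_lt_c (by omega) le_rfl).trans_le hx.2

theorem Fmap_Icc_eq_image (hj1 : 1 ≤ j) (hjN : j ≤ P.N)
    (huv : max a (P.c (j - 1)) < min b (P.c j)) :
    P.Fmap j (Icc a b) = P.fe j '' Icc (max a (P.c (j - 1))) (min b (P.c j)) := by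
  have hsub : Icc a b ∩ P.piece j ⊆ Icc (max a (P.c (j - 1))) (min b (P.c j)) := fun x hx ↦
    ⟨max_le hx.1.1 (P.piece_subset_Icc hjN hx.2).1,
      le_min hx.1.2 (P.piece_subset_Icc hjN hx.2).2⟩
  have hsup : Ioo (max a (P.c (j - 1))) (min b (P.c j)) ⊆ Icc a b ∩ P.piece j := fun x hx ↦
    ⟨⟨(le_max_left _ _).trans hx.1.le, hx.2.le.trans (min_le_left _ _)⟩,
      P.mem_piece.2 <| Or.inl
        ⟨(le_max_right _ _).trans_lt hx.1, hx.2.trans_le (min_le_right _ _)⟩⟩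
  have hcont : ContinuousOn (P.fe j) (Icc (max a (P.c (j - 1))) (min b (P.c j))) :=
    (P.continuousOn_fe hj1 hjN).mono (Icc_subset_Icc (le_max_right _ _) (min_le_right _ _))
  rw [Fmap, ← image_congr fun x hx ↦ P.fe_eq_f hj1 hjN hx.2, ← closure_Ioo huv.ne]
  rw [← closure_Ioo huv.ne] at hsub hcont
  exact closure_image_eq_image_closure_of_subset (closure_Ioo huv.ne ▸ isCompact_Icc) hcont
    hsup hsub

theorem hasOrbitEndpoints_of_step (hj1 : 1 ≤ j) (hjN : j ≤ P.N) {x y : ℝ}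
    (H : (a = P.c 0 ∧ b = P.c P.N) ∨ P.HasOrbitEndpoints a b)
    (hx : (a ∈ P.piece j ∧ x = P.f a) ∨ (2 ≤ j ∧ x = P.dplus (j - 1)))
    (hy : (b ∈ P.piece j ∧ y = P.f b) ∨ (j < P.N ∧ y = P.dminus j)) :
    P.HasOrbitEndpoints x y := by
  have hDpm : P.Dminus ∪ P.Dplus ⊆ P.D := subset_union_left
  have hdplus : 2 ≤ j → P.dplus (j - 1) ∈ P.Dminus ∪ P.Dplus := fun h ↦
    mem_union_right _ ⟨j - 1, by omega, by omega, rfl⟩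
  have hdminus : j < P.N → P.dminus j ∈ P.Dminus ∪ P.Dplus := fun h ↦
    mem_union_left _ ⟨j, hj1, h, rfl⟩
  refine ⟨?_, ?_, ?_⟩
  · rcases hx with ⟨-, rfl⟩ | ⟨h, rfl⟩
    · rcases H with ⟨rfl, -⟩ | H
      exacts [P.onOrbit_of_mem P.f_c_zero_mem_D, H.1.f]
    · exact P.onOrbit_of_mem (hDpm (hdplus h))
  · rcases hy with ⟨-, rfl⟩ | ⟨h, rfl⟩
    · rcases H with ⟨-, rfl⟩ | H
      exacts [P.onOrbit_of_mem P.f_c_N_mem_D, H.2.1.f]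
    · exact P.onOrbit_of_mem (hDpm (hdminus h))
  rcases hx with ⟨ha, rfl⟩ | ⟨h, rfl⟩
  · rcases hy with ⟨hb, rfl⟩ | ⟨h, rfl⟩
    · rcases H with ⟨rfl, rfl⟩ | H
      · exact absurd ⟨ha, hb⟩ (P.not_c_zero_mem_piece_and_c_N_mem_piece hjN)
      · exact H.2.2.imp (fun h ↦ h.f) fun h ↦ h.f
    · exact Or.inr (P.onOrbit_of_mem (hdminus h))
  · exact Or.inl (P.onOrbit_of_mem (hdplus h))

theorem exists_Fmap_Icc_eq_Icc (hinj : P.InjPieces) (hj1 : 1 ≤ j) (hjN : j ≤ P.N)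
    (ha : P.c 0 ≤ a) (hb : b ≤ P.c P.N) (hab : a < b) (hne : (P.Fmap j (Icc a b)).Nonempty)
    (H : (a = P.c 0 ∧ b = P.c P.N) ∨ P.HasOrbitEndpoints a b) :
    ∃ a' b', a' < b' ∧ P.Fmap j (Icc a b) = Icc a' b' ∧ P.HasOrbitEndpoints a' b' := by
  have huv := P.max_lt_min_of_inter_piece_nonempty hj1 hjN ha hb hab
    (image_nonempty.1 hne.of_closure)
  have hsub : Icc (max a (P.c (j - 1))) (min b (P.c j)) ⊆ Icc (P.c (j - 1)) (P.c j) :=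
    Icc_subset_Icc (le_max_right _ _) (min_le_right _ _)
  have hinj' := (P.injOn_fe hinj hj1 hjN).mono hsub
  have hx := P.fe_max_eq hj1 hjN ha ((le_max_left _ _).trans_lt (huv.trans_le (min_le_right _ _)))
  have hy := P.fe_min_eq hj1 hjN hb (((le_max_right _ _).trans_lt huv).trans_le (min_le_left _ _))
  obtain ⟨a', b', hab', heq, hE⟩ := P.exists_Icc_eq_uIcc
    (hinj'.ne (left_mem_Icc.2 huv.le) (right_mem_Icc.2 huv.le) huv.ne)
    (P.hasOrbitEndpoints_of_step hj1 hjN H hx hy)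
  refine ⟨a', b', hab', ?_, hE⟩
  rw [P.Fmap_Icc_eq_image hj1 hjN huv, ((P.continuousOn_fe hj1 hjN).mono hsub).image_Icc_of_injOn
    huv.le hinj', heq]

theorem atomOf_append_singleton (w : List ℕ) (j : ℕ) :
    P.atomOf (w ++ [j]) = P.Fmap j (P.atomOf w) := by
  simp only [atomOf, List.foldl_append, List.foldl_cons, List.foldl_nil]

theorem exists_atomOf_eq_Icc (hinj : P.InjPieces) (w : List ℕ)
    (hw : ∀ i ∈ w, 1 ≤ i ∧ i ≤ P.N) (hne : (P.atomOf w).Nonempty) :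
    ∃ a b, a < b ∧ P.atomOf w = Icc a b ∧ Icc a b ⊆ P.X ∧
      ((w = [] ∧ a = P.c 0 ∧ b = P.c P.N) ∨ P.HasOrbitEndpoints a b) := by
  induction w using List.reverseRecOn with
  | nil =>
    exact ⟨P.c 0, P.c P.N, P.c_lt_c (by have := P.hN; omega) le_rfl, rfl, subset_rfl,
      Or.inl ⟨rfl, rfl, rfl⟩⟩
  | append_singleton w j ih =>
    have hj := hw j (by simp)
    rw [atomOf_append_singleton] at hne ⊢
    obtain ⟨a, b, hab, heq, hX, H⟩ := ih (fun i hi ↦ hw i (by simp [hi]))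
      ((image_nonempty.1 hne.of_closure).mono inter_subset_left)
    obtain ⟨ha, hb⟩ := (Icc_subset_Icc_iff hab.le).1 hX
    rw [heq] at hne ⊢
    obtain ⟨a', b', hab', heq', hE⟩ :=
      P.exists_Fmap_Icc_eq_Icc hinj hj.1 hj.2 ha hb hab hne (H.imp_left And.right)
    exact ⟨a', b', hab', heq', heq' ▸ P.Fmap_subset_X hj.2 _, Or.inr hE⟩

end PCIM

theorem stmt4_general (P : PCIM) (hinj : P.InjPieces)
    (n : ℕ) (hn : 1 ≤ n) (A : Set ℝ) (hA : P.IsAtomGen n A) :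
    ∃ a b : ℝ, a ≠ b ∧ A = Set.Icc a b ∧
      (∃ d ∈ P.D, a ∈ P.orbit d) ∧ (∃ d ∈ P.D, b ∈ P.orbit d) ∧
      ((∃ d ∈ P.Dminus ∪ P.Dplus, a ∈ P.orbit d) ∨
        (∃ d ∈ P.Dminus ∪ P.Dplus, b ∈ P.orbit d)) := by
  obtain ⟨w, rfl, hw, rfl, hne⟩ := hA
  have hw0 : w ≠ [] := by
    rintro rfl
    exact absurd hn (by simp)
  obtain ⟨a, b, hab, heq, -, H⟩ := P.exists_atomOf_eq_Icc hinj w hw hne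
  exact ⟨a, b, hab.ne, heq, H.resolve_left fun h ↦ hw0 h.1⟩

/-- If `f` is injective on each piece and `D ⊆ X̃`, every atom of generation `n ≥ 1`
is a nondegenerate compact interval `[a, b]` whose endpoints lie on orbits of points of
`D`, at least one of them on the orbit of a lateral limit `d_i^±` at an interior
boundary point. -/
theorem stmt4 (P : PCIM) (hinj : P.InjPieces) (hD : P.D ⊆ P.Xt)
    (n : ℕ) (hn : 1 ≤ n) (A : Set ℝ) (hA : P.IsAtomGen n A) :
    ∃ a b : ℝ, a ≠ b ∧ A = Set.Icc a b ∧
      (∃ d ∈ P.D, a ∈ P.orbit d) ∧ (∃ d ∈ P.D, b ∈ P.orbit d) ∧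
      ((∃ d ∈ P.Dminus ∪ P.Dplus, a ∈ P.orbit d) ∨
        (∃ d ∈ P.Dminus ∪ P.Dplus, b ∈ P.orbit d)) :=
  stmt4_general P hinj n hn A hA
end

section
/- Let f be a piecewise contracting interval map which is injective on each contraction piece and satisfies D ⊂ X̃. Then the attractor Λ = ⋂_{n≥1} Λ_n (where Λ_1 = closure(f(X \ Δ)) and Λ_{n+1} = closure(f(Λ_n \ Δ))) equals the union over d ∈ D of the ω-limit sets ω(d). -/
open Filter Topology Set

namespace PCIM

variable (P : PCIM)

lemma lam_pos : 0 < P.lam := P.hlam.1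
lemma lam_lt_one : P.lam < 1 := P.hlam.2

lemma c_mono {i j : ℕ} (hij : i ≤ j) (hj : j ≤ P.N) : P.c i ≤ P.c j :=
  P.hc.monotoneOn (le_trans hij hj) hj hij

lemma c_lt {i : ℕ} (h1 : 1 ≤ i) (h2 : i ≤ P.N) : P.c (i - 1) < P.c i :=
  P.hc (le_trans (Nat.sub_le i 1) h2) h2 (by omega)

lemma c0_lt_cN : P.c 0 < P.c P.N :=
  P.hc (Set.mem_Iic.2 (Nat.zero_le _)) (Set.mem_Iic.2 le_rfl) (by have := P.hN; omega)

lemma isClosed_X : IsClosed P.X := by unfold PCIM.X; exact isClosed_Icc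

lemma Icc_subset_X {i : ℕ} (h1 : 1 ≤ i) (h2 : i ≤ P.N) :
    Set.Icc (P.c (i - 1)) (P.c i) ⊆ P.X :=
  Set.Icc_subset_Icc (P.c_mono (Nat.zero_le _) (le_trans (Nat.sub_le i 1) h2))
    (P.c_mono h2 le_rfl)

lemma Ioo_subset_piece {i : ℕ} :
    Set.Ioo (P.c (i - 1)) (P.c i) ⊆ P.piece i := fun _ hz => Or.inl (Or.inl hz)

lemma piece_subset_Icc_s5 {i : ℕ} (h1 : 1 ≤ i) (h2 : i ≤ P.N) :
    P.piece i ⊆ Set.Icc (P.c (i - 1)) (P.c i) := by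
  intro z hz
  rcases hz with (hz | hz) | hz
  · exact Set.Ioo_subset_Icc_self hz
  · by_cases h : i = 1
    · rw [if_pos h] at hz
      rcases hz with rfl
      subst h
      refine ⟨le_rfl, ?_⟩
      have h2 : (1:ℕ) ≤ P.N := by have := P.hN; omega
      have := P.c_lt le_rfl h2
      simpa using this.le
    · rw [if_neg h] at hz; exact absurd hz (Set.notMem_empty _)
  · by_cases h : i = P.N
    · rw [if_pos h] at hz
      rcases hz with rfl
      subst h
      exact ⟨(P.c_lt h1 h2).le, le_rfl⟩
    · rw [if_neg h] at hz; exact absurd hz (Set.notMem_empty _)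

lemma f_eq_fe {i : ℕ} (h1 : 1 ≤ i) (h2 : i ≤ P.N) {z : ℝ} (hz : z ∈ P.piece i) :
    P.f z = P.fe i z := by
  rcases hz with (hz | hz) | hz
  · exact (P.hfe_eq i h1 h2 z hz).symm
  · by_cases h : i = 1
    · rw [if_pos h] at hz
      rcases hz with rfl
      subst h
      exact P.hfe_left.symm
    · rw [if_neg h] at hz; exact absurd hz (Set.notMem_empty _)
  · by_cases h : i = P.N
    · rw [if_pos h] at hz
      rcases hz with rfl
      subst h
      exact P.hfe_right.symm
    · rw [if_neg h] at hz; exact absurd hz (Set.notMem_empty _)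

lemma fe_contOn {i : ℕ} (h1 : 1 ≤ i) (h2 : i ≤ P.N) :
    ContinuousOn (P.fe i) (Set.Icc (P.c (i - 1)) (P.c i)) := by
  have : LipschitzOnWith (Real.toNNReal P.lam) (P.fe i) (Set.Icc (P.c (i - 1)) (P.c i)) := by
    apply LipschitzOnWith.of_dist_le_mul
    intro x hx y hy
    rw [Real.dist_eq, Real.dist_eq, Real.coe_toNNReal _ P.lam_pos.le]
    exact P.hfe_lip i h1 h2 x hx y hy
  exact this.continuousOn

lemma fe_injOn_Ioo (hinj : P.InjPieces) {i : ℕ} (h1 : 1 ≤ i) (h2 : i ≤ P.N) :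
    Set.InjOn (P.fe i) (Set.Ioo (P.c (i - 1)) (P.c i)) := by
  intro x hx y hy h
  apply hinj i h1 h2 (P.Ioo_subset_piece hx) (P.Ioo_subset_piece hy)
  rw [P.f_eq_fe h1 h2 (P.Ioo_subset_piece hx), P.f_eq_fe h1 h2 (P.Ioo_subset_piece hy)]
  exact h

end PCIM


namespace PCIM

variable (P : PCIM)

lemma monotoneOn_Icc_of_strictMonoOn_Ioo {g : ℝ → ℝ} {u v : ℝ} (huv : u < v)
    (hc : ContinuousOn g (Set.Icc u v)) (hm : StrictMonoOn g (Set.Ioo u v)) :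
    MonotoneOn g (Set.Icc u v) := by
  have claim1 : ∀ x ∈ Set.Icc u v, ∀ q ∈ Set.Ioo u v, x < q → g x ≤ g q := by
    intro x hx q hq hxq
    have hsub : Set.Ioo x q ⊆ Set.Icc u v := fun t ht =>
      ⟨le_trans hx.1 ht.1.le, le_trans ht.2.le hq.2.le⟩
    have hsub' : Set.Ioo x q ⊆ Set.Ioo u v := fun t ht =>
      ⟨lt_of_le_of_lt hx.1 ht.1, lt_trans ht.2 hq.2⟩
    have ht : Filter.Tendsto g (nhdsWithin x (Set.Ioo x q)) (nhds (g x)) :=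
      ((hc x hx).mono hsub)
    rw [nhdsWithin_Ioo_eq_nhdsGT hxq] at ht
    refine le_of_tendsto ht ?_
    rw [← nhdsWithin_Ioo_eq_nhdsGT hxq]
    filter_upwards [self_mem_nhdsWithin] with t ht'
    exact (hm (hsub' ht') hq ht'.2).le
  have claim2 : ∀ y ∈ Set.Icc u v, ∀ p ∈ Set.Ioo u v, p < y → g p ≤ g y := by
    intro y hy p hp hpy
    have hsub : Set.Ioo p y ⊆ Set.Icc u v := fun t ht =>
      ⟨le_trans hp.1.le ht.1.le, le_trans ht.2.le hy.2⟩
    have hsub' : Set.Ioo p y ⊆ Set.Ioo u v := fun t ht =>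
      ⟨lt_trans hp.1 ht.1, lt_of_lt_of_le ht.2 hy.2⟩
    have ht : Filter.Tendsto g (nhdsWithin y (Set.Ioo p y)) (nhds (g y)) :=
      ((hc y hy).mono hsub)
    rw [nhdsWithin_Ioo_eq_nhdsLT hpy] at ht
    refine ge_of_tendsto ht ?_
    rw [← nhdsWithin_Ioo_eq_nhdsLT hpy]
    filter_upwards [self_mem_nhdsWithin] with t ht'
    exact (hm hp (hsub' ht') ht'.1).le
  intro x hx y hy hxy
  rcases eq_or_lt_of_le hxy with rfl | hlt
  · exact le_rfl
  obtain ⟨m, hm1⟩ : (Set.Ioo x y).Nonempty := Set.nonempty_Ioo.2 hlt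
  have hmIoo : m ∈ Set.Ioo u v := ⟨lt_of_le_of_lt hx.1 hm1.1, lt_of_lt_of_le hm1.2 hy.2⟩
  exact le_trans (claim1 x hx m hmIoo hm1.1) (claim2 y hy m hmIoo hm1.2)

lemma fe_mono_or_anti (hinj : P.InjPieces) {i : ℕ} (h1 : 1 ≤ i) (h2 : i ≤ P.N) :
    MonotoneOn (P.fe i) (Set.Icc (P.c (i - 1)) (P.c i)) ∨
      AntitoneOn (P.fe i) (Set.Icc (P.c (i - 1)) (P.c i)) := by
  have hlt := P.c_lt h1 h2
  have hcont := P.fe_contOn h1 h2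
  have hioo := hcont.mono Set.Ioo_subset_Icc_self
  rcases ContinuousOn.strictMonoOn_of_injOn_Ioo hlt hioo (P.fe_injOn_Ioo hinj h1 h2) with h | h
  · exact Or.inl (monotoneOn_Icc_of_strictMonoOn_Ioo hlt hcont h)
  · right
    have hmono : MonotoneOn (fun t => -(P.fe i t)) (Set.Icc (P.c (i - 1)) (P.c i)) := by
      apply monotoneOn_Icc_of_strictMonoOn_Ioo hlt hcont.neg
      intro a ha b hb hab
      simpa using h ha hb hab
    intro a ha b hb hab
    have := hmono ha hb hab
    simpa using this

lemma image_Icc_of_monotoneOn {g : ℝ → ℝ} {u v : ℝ} (huv : u ≤ v)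
    (hc : ContinuousOn g (Set.Icc u v)) (hm : MonotoneOn g (Set.Icc u v)) :
    g '' Set.Icc u v = Set.Icc (g u) (g v) := by
  apply Set.Subset.antisymm
  · rintro _ ⟨t, ht, rfl⟩
    exact ⟨hm (Set.left_mem_Icc.2 huv) ht ht.1, hm ht (Set.right_mem_Icc.2 huv) ht.2⟩
  · exact intermediate_value_Icc huv hc

lemma image_Icc_of_antitoneOn {g : ℝ → ℝ} {u v : ℝ} (huv : u ≤ v)
    (hc : ContinuousOn g (Set.Icc u v)) (hm : AntitoneOn g (Set.Icc u v)) :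
    g '' Set.Icc u v = Set.Icc (g v) (g u) := by
  apply Set.Subset.antisymm
  · rintro _ ⟨t, ht, rfl⟩
    exact ⟨hm ht (Set.right_mem_Icc.2 huv) ht.2, hm (Set.left_mem_Icc.2 huv) ht ht.1⟩
  · exact intermediate_value_Icc' huv hc

lemma closure_inter_piece {i : ℕ} (h1 : 1 ≤ i) (h2 : i ≤ P.N) {a b : ℝ} (hab : a ≤ b)
    (hne : (Set.Icc a b ∩ P.piece i).Nonempty) :
    closure (Set.Icc a b ∩ P.piece i)
      = Set.Icc (max a (P.c (i - 1))) (min b (P.c i)) ∧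
    max a (P.c (i - 1)) ≤ min b (P.c i) := by
  obtain ⟨z, hz1, hz2⟩ := hne
  have hzI : z ∈ Set.Icc (P.c (i - 1)) (P.c i) := P.piece_subset_Icc_s5 h1 h2 hz2
  set u := max a (P.c (i - 1)) with hu
  set v := min b (P.c i) with hv
  have huz : u ≤ z := max_le hz1.1 hzI.1
  have hzv : z ≤ v := le_min hz1.2 hzI.2
  have huv : u ≤ v := le_trans huz hzv
  refine ⟨?_, huv⟩
  have hupper : Set.Icc a b ∩ P.piece i ⊆ Set.Icc u v := by
    intro t ⟨ht1, ht2⟩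
    have htI := P.piece_subset_Icc_s5 h1 h2 ht2
    exact ⟨max_le ht1.1 htI.1, le_min ht1.2 htI.2⟩
  apply Set.Subset.antisymm
  · exact closure_minimal hupper isClosed_Icc
  · rcases eq_or_lt_of_le huv with heq | hlt
    · have hz_eq : z = u := le_antisymm (heq ▸ hzv) huz
      intro t ht
      have ht_eq : t = u := le_antisymm (heq ▸ ht.2) ht.1
      rw [ht_eq, ← hz_eq]
      exact subset_closure ⟨hz1, hz2⟩
    · have hIoo : Set.Ioo u v ⊆ Set.Icc a b ∩ P.piece i := by
        intro t ht
        refine ⟨⟨le_trans (le_max_left _ _) ht.1.le, le_trans ht.2.le (min_le_left _ _)⟩,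
          P.Ioo_subset_piece ⟨lt_of_le_of_lt (le_max_right _ _) ht.1, lt_of_lt_of_le ht.2 (min_le_right _ _)⟩⟩
      calc Set.Icc u v = closure (Set.Ioo u v) := (closure_Ioo hlt.ne).symm
      _ ⊆ closure (Set.Icc a b ∩ P.piece i) := closure_mono hIoo

end PCIM


namespace PCIM

variable (P : PCIM)

lemma fe_image_subset_X {i : ℕ} (h1 : 1 ≤ i) (h2 : i ≤ P.N) :
    P.fe i '' Set.Icc (P.c (i - 1)) (P.c i) ⊆ P.X := by
  have hlt := P.c_lt h1 h2
  have hIcc : Set.Icc (P.c (i - 1)) (P.c i) = closure (Set.Ioo (P.c (i - 1)) (P.c i)) :=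
    (closure_Ioo hlt.ne).symm
  have hcont : ContinuousOn (P.fe i) (closure (Set.Ioo (P.c (i - 1)) (P.c i))) := by
    rw [← hIcc]; exact P.fe_contOn h1 h2
  have h1' : P.fe i '' Set.Icc (P.c (i - 1)) (P.c i)
      ⊆ closure (P.fe i '' Set.Ioo (P.c (i - 1)) (P.c i)) := by
    rw [hIcc]; exact hcont.image_closure
  have h2' : P.fe i '' Set.Ioo (P.c (i - 1)) (P.c i) ⊆ P.X := by
    rintro _ ⟨t, ht, rfl⟩
    rw [P.hfe_eq i h1 h2 t ht]
    exact P.hmap (P.Icc_subset_X h1 h2 (Set.Ioo_subset_Icc_self ht))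
  exact h1'.trans (closure_minimal h2' P.isClosed_X)

lemma fe_left_mem_D {i : ℕ} (h1 : 1 ≤ i) (h2 : i ≤ P.N) : P.fe i (P.c (i - 1)) ∈ P.D := by
  rcases eq_or_lt_of_le h1 with h | h
  · right
    left
    simp [← h]
  · left; right
    refine ⟨i - 1, by omega, by omega, ?_⟩
    unfold dplus
    congr 1
    omega

lemma fe_right_mem_D {i : ℕ} (h1 : 1 ≤ i) (h2 : i ≤ P.N) : P.fe i (P.c i) ∈ P.D := by
  rcases eq_or_lt_of_le h2 with h | h
  · right
    right
    simp [h]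
  · left; left
    exact ⟨i, h1, h, rfl⟩

lemma Fmap_interval (hinj : P.InjPieces) {i : ℕ} (h1 : 1 ≤ i) (h2 : i ≤ P.N) {a b : ℝ}
    (hab : a ≤ b) (hX : Set.Icc a b ⊆ P.X)
    (hne : (Set.Icc a b ∩ P.piece i).Nonempty) :
    max a (P.c (i - 1)) ≤ min b (P.c i) ∧
      (P.Fmap i (Set.Icc a b)
          = Set.Icc (P.fe i (max a (P.c (i - 1)))) (P.fe i (min b (P.c i))) ∨
       P.Fmap i (Set.Icc a b)
          = Set.Icc (P.fe i (min b (P.c i))) (P.fe i (max a (P.c (i - 1))))) ∧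
      P.Fmap i (Set.Icc a b) ⊆ P.X ∧
      |P.fe i (min b (P.c i)) - P.fe i (max a (P.c (i - 1)))| ≤ P.lam * (b - a) := by
  obtain ⟨hclos, huv⟩ := P.closure_inter_piece h1 h2 hab hne
  set u := max a (P.c (i - 1)) with hu
  set v := min b (P.c i) with hv
  have huc : P.c (i - 1) ≤ u := le_max_right _ _
  have hvc : v ≤ P.c i := min_le_right _ _
  have hsubc : Set.Icc u v ⊆ Set.Icc (P.c (i - 1)) (P.c i) :=
    Set.Icc_subset_Icc huc hvc
  have humem : u ∈ Set.Icc (P.c (i - 1)) (P.c i) := ⟨huc, le_trans huv hvc⟩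
  have hvmem : v ∈ Set.Icc (P.c (i - 1)) (P.c i) := ⟨le_trans huc huv, hvc⟩
  have hcont : ContinuousOn (P.fe i) (Set.Icc u v) := (P.fe_contOn h1 h2).mono hsubc
  -- f '' S = fe i '' S
  have himg : P.f '' (Set.Icc a b ∩ P.piece i) = P.fe i '' (Set.Icc a b ∩ P.piece i) :=
    Set.image_congr fun z hz => P.f_eq_fe h1 h2 hz.2
  -- image of closed interval
  have hkey : P.Fmap i (Set.Icc a b) = P.fe i '' Set.Icc u v := by
    unfold Fmap
    rw [himg]
    apply Set.Subset.antisymm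
    · apply closure_minimal
      · apply Set.image_mono
        rw [← hclos]; exact subset_closure
      · rcases P.fe_mono_or_anti hinj h1 h2 with hm | hm
        · rw [image_Icc_of_monotoneOn huv hcont (hm.mono hsubc)]; exact isClosed_Icc
        · rw [image_Icc_of_antitoneOn huv hcont (hm.mono hsubc)]; exact isClosed_Icc
    · have : ContinuousOn (P.fe i) (closure (Set.Icc a b ∩ P.piece i)) := by
        rw [hclos]; exact hcont
      calc P.fe i '' Set.Icc u v = P.fe i '' closure (Set.Icc a b ∩ P.piece i) := by rw [hclos]
      _ ⊆ closure (P.fe i '' (Set.Icc a b ∩ P.piece i)) := this.image_closure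
  refine ⟨huv, ?_, ?_, ?_⟩
  · rcases P.fe_mono_or_anti hinj h1 h2 with hm | hm
    · left; rw [hkey, image_Icc_of_monotoneOn huv hcont (hm.mono hsubc)]
    · right; rw [hkey, image_Icc_of_antitoneOn huv hcont (hm.mono hsubc)]
  · rw [hkey]
    exact le_trans (Set.image_mono hsubc) (P.fe_image_subset_X h1 h2)
  · have := P.hfe_lip i h1 h2 v hvmem u humem
    apply le_trans this
    have habs : |v - u| = v - u := abs_of_nonneg (by linarith)
    rw [habs]
    have h1' : a ≤ u := le_max_left _ _
    have h2' : v ≤ b := min_le_left _ _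
    have : v - u ≤ b - a := by linarith
    nlinarith [P.lam_pos]

end PCIM


namespace PCIM

variable (P : PCIM)

lemma atomOf_nil : P.atomOf [] = P.X := rfl

lemma atomOf_concat (w : List ℕ) (i : ℕ) :
    P.atomOf (w ++ [i]) = P.Fmap i (P.atomOf w) := by
  unfold atomOf
  rw [List.foldl_append]
  rfl

lemma endpoint_orbit {i n : ℕ} (h1 : 1 ≤ i) (h2 : i ≤ P.N) {u : ℝ}
    (hu1 : P.c (i - 1) ≤ u) (hu2 : u ≤ P.c i)
    (hor : u = P.c (i - 1) ∨ u = P.c i ∨ (∃ d ∈ P.D, ∃ k, k < n ∧ u = P.f^[k] d)) :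
    ∃ d ∈ P.D, ∃ k, k < n + 1 ∧ P.fe i u = P.f^[k] d := by
  by_cases hc1 : u = P.c (i - 1)
  · subst hc1
    exact ⟨P.fe i (P.c (i - 1)), P.fe_left_mem_D h1 h2, 0, Nat.succ_pos _, rfl⟩
  by_cases hc2 : u = P.c i
  · subst hc2
    exact ⟨P.fe i (P.c i), P.fe_right_mem_D h1 h2, 0, Nat.succ_pos _, rfl⟩
  rcases hor with h | h | ⟨d, hd, k, hk, rfl⟩
  · exact absurd h hc1
  · exact absurd h hc2
  · have hIoo : P.f^[k] d ∈ Set.Ioo (P.c (i - 1)) (P.c i) :=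
      ⟨lt_of_le_of_ne hu1 (Ne.symm hc1), lt_of_le_of_ne hu2 hc2⟩
    refine ⟨d, hd, k + 1, by omega, ?_⟩
    rw [Function.iterate_succ_apply']
    exact P.hfe_eq i h1 h2 _ hIoo

lemma atom_inv (hinj : P.InjPieces) :
    ∀ w : List ℕ, (∀ j ∈ w, 1 ≤ j ∧ j ≤ P.N) → (P.atomOf w).Nonempty → 1 ≤ w.length →
    ∃ a b, P.atomOf w = Set.Icc a b ∧ a ≤ b ∧ Set.Icc a b ⊆ P.X ∧
      b - a ≤ P.lam ^ w.length * (P.c P.N - P.c 0) ∧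
      (∃ d ∈ P.D, ∃ k, k < w.length ∧ a = P.f^[k] d) ∧
      (∃ e ∈ P.D, ∃ l, l < w.length ∧ b = P.f^[l] e) := by
  intro w
  induction w using List.reverseRecOn with
  | nil => intro _ _ h; simp at h
  | append_singleton w i ih =>
    intro hvalid hne _
    have hival : 1 ≤ i ∧ i ≤ P.N := hvalid i (by simp)
    obtain ⟨h1, h2⟩ := hival
    rw [P.atomOf_concat] at hne ⊢
    -- the underlying set is nonempty
    have hSne : (P.atomOf w ∩ P.piece i).Nonempty := by
      by_contra h
      rw [Set.not_nonempty_iff_eq_empty] at h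
      unfold Fmap at hne
      rw [h] at hne
      simp at hne
    have hwvalid : ∀ j ∈ w, 1 ≤ j ∧ j ≤ P.N := fun j hj => hvalid j (by simp [hj])
    have hwne : (P.atomOf w).Nonempty := ⟨hSne.choose, hSne.choose_spec.1⟩
    -- get interval representation of atomOf w, with endpoint info when w ≠ []
    rcases List.eq_nil_or_concat w with rfl | hconc
    · -- base case : atomOf [] = X
      rw [P.atomOf_nil] at hSne hne ⊢
      have hXIcc : P.X = Set.Icc (P.c 0) (P.c P.N) := rfl
      rw [hXIcc] at hSne hne ⊢
      obtain ⟨huv, hcases, hsubX, hdiam⟩ :=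
        P.Fmap_interval hinj h1 h2 P.c0_lt_cN.le (by rw [← hXIcc]) hSne
      have hu1 : P.c (i - 1) ≤ max (P.c 0) (P.c (i - 1)) := le_max_right _ _
      have hu2 : max (P.c 0) (P.c (i - 1)) ≤ P.c i := le_trans huv (min_le_right _ _)
      have hv1 : P.c (i - 1) ≤ min (P.c P.N) (P.c i) := le_trans (le_max_right _ _) huv
      have hv2 : min (P.c P.N) (P.c i) ≤ P.c i := min_le_right _ _
      have hmaxeq : max (P.c 0) (P.c (i - 1)) = P.c (i - 1) :=
        max_eq_right (P.c_mono (Nat.zero_le _) (le_trans (Nat.sub_le i 1) h2))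
      have hmineq : min (P.c P.N) (P.c i) = P.c i := min_eq_right (P.c_mono h2 le_rfl)
      have hud : ∃ d ∈ P.D, ∃ k, k < 0 + 1 ∧ P.fe i (max (P.c 0) (P.c (i - 1))) = P.f^[k] d :=
        P.endpoint_orbit h1 h2 hu1 hu2 (Or.inl hmaxeq)
      have hvd : ∃ d ∈ P.D, ∃ k, k < 0 + 1 ∧ P.fe i (min (P.c P.N) (P.c i)) = P.f^[k] d :=
        P.endpoint_orbit h1 h2 hv1 hv2 (Or.inr (Or.inl hmineq))
      obtain ⟨d, hd, k, hk, hdk⟩ := hud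
      obtain ⟨e, he, l, hl, hel⟩ := hvd
      have hlen : ((List.nil : List ℕ) ++ [i]).length = 1 := by simp
      rw [hlen]
      have hdiam' : |P.fe i (min (P.c P.N) (P.c i)) - P.fe i (max (P.c 0) (P.c (i - 1)))|
          ≤ P.lam ^ 1 * (P.c P.N - P.c 0) := by
        rw [pow_one]; exact hdiam
      rcases hcases with hcase | hcase
      · refine ⟨_, _, hcase, ?_, hcase ▸ hsubX, ?_, ⟨d, hd, k, by omega, hdk⟩,
          ⟨e, he, l, by omega, hel⟩⟩
        · rw [hcase] at hne; exact (Set.nonempty_Icc.1 hne)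
        · exact le_trans (le_abs_self _) hdiam'
      · refine ⟨_, _, hcase, ?_, hcase ▸ hsubX, ?_, ⟨e, he, l, by omega, hel⟩,
          ⟨d, hd, k, by omega, hdk⟩⟩
        · rw [hcase] at hne; exact (Set.nonempty_Icc.1 hne)
        · rw [abs_sub_comm] at hdiam'
          exact le_trans (le_abs_self _) hdiam'
    · -- inductive case : w ≠ []
      have hwlen : 1 ≤ w.length := by
        obtain ⟨l, aa, rfl⟩ := hconc
        simp
      obtain ⟨a, b, hIcc, hab, hsub, hdiam, ⟨d0, hd0, k0, hk0, ha0⟩, ⟨e0, he0, l0, hl0, hb0⟩⟩ :=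
        ih hwvalid hwne hwlen
      rw [hIcc] at hSne hne ⊢
      obtain ⟨huv, hcases, hsubX, hdiamF⟩ := P.Fmap_interval hinj h1 h2 hab hsub hSne
      set u := max a (P.c (i - 1)) with hu
      set v := min b (P.c i) with hv
      have hu1 : P.c (i - 1) ≤ u := le_max_right _ _
      have hu2 : u ≤ P.c i := le_trans huv (min_le_right _ _)
      have hv1 : P.c (i - 1) ≤ v := le_trans hu1 huv
      have hv2 : v ≤ P.c i := min_le_right _ _
      have hud : ∃ d ∈ P.D, ∃ k, k < w.length + 1 ∧ P.fe i u = P.f^[k] d := by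
        apply P.endpoint_orbit h1 h2 hu1 hu2
        rcases max_choice a (P.c (i - 1)) with h | h
        · exact Or.inr (Or.inr ⟨d0, hd0, k0, hk0, by rw [hu, h, ha0]⟩)
        · exact Or.inl (by rw [hu, h])
      have hvd : ∃ d ∈ P.D, ∃ l, l < w.length + 1 ∧ P.fe i v = P.f^[l] d := by
        apply P.endpoint_orbit h1 h2 hv1 hv2
        rcases min_choice b (P.c i) with h | h
        · exact Or.inr (Or.inr ⟨e0, he0, l0, hl0, by rw [hv, h, hb0]⟩)
        · exact Or.inr (Or.inl (by rw [hv, h]))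
      obtain ⟨d, hd, k, hk, hdk⟩ := hud
      obtain ⟨e, he, l, hl, hel⟩ := hvd
      have hlen : (w ++ [i]).length = w.length + 1 := by simp
      rw [hlen]
      have hdiam' : |P.fe i v - P.fe i u| ≤ P.lam ^ (w.length + 1) * (P.c P.N - P.c 0) := by
        apply le_trans hdiamF
        rw [pow_succ, mul_comm (P.lam ^ w.length) P.lam, mul_assoc]
        exact mul_le_mul_of_nonneg_left hdiam P.lam_pos.le
      rcases hcases with hcase | hcase
      · refine ⟨_, _, hcase, ?_, hcase ▸ hsubX, ?_, ⟨d, hd, k, hk, hdk⟩, ⟨e, he, l, hl, hel⟩⟩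
        · rw [hcase] at hne; exact Set.nonempty_Icc.1 hne
        · exact le_trans (le_abs_self _) hdiam'
      · refine ⟨_, _, hcase, ?_, hcase ▸ hsubX, ?_, ⟨e, he, l, hl, hel⟩, ⟨d, hd, k, hk, hdk⟩⟩
        · rw [hcase] at hne; exact Set.nonempty_Icc.1 hne
        · rw [abs_sub_comm] at hdiam'
          exact le_trans (le_abs_self _) hdiam'

lemma atom_interval (hinj : P.InjPieces) (w : List ℕ) (hvalid : ∀ j ∈ w, 1 ≤ j ∧ j ≤ P.N)
    (hne : (P.atomOf w).Nonempty) :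
    ∃ a b, a ≤ b ∧ P.atomOf w = Set.Icc a b ∧ Set.Icc a b ⊆ P.X := by
  rcases Nat.eq_zero_or_pos w.length with h | h
  · rw [List.length_eq_zero_iff] at h
    subst h
    exact ⟨P.c 0, P.c P.N, P.c0_lt_cN.le, rfl, le_rfl⟩
  · obtain ⟨a, b, hIcc, hab, hsub, -⟩ := P.atom_inv hinj w hvalid hne h
    exact ⟨a, b, hab, hIcc, hsub⟩

end PCIM


namespace PCIM

variable (P : PCIM)

lemma atom_not_subsingleton (hinj : P.InjPieces) :
    ∀ w : List ℕ, (∀ j ∈ w, 1 ≤ j ∧ j ≤ P.N) → (P.atomOf w).Nonempty →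
    ¬ (P.atomOf w).Subsingleton := by
  intro w
  induction w using List.reverseRecOn with
  | nil =>
    intro _ _ hss
    rw [P.atomOf_nil] at hss
    have h1 : P.c 0 ∈ P.X := ⟨le_rfl, P.c0_lt_cN.le⟩
    have h2 : P.c P.N ∈ P.X := ⟨P.c0_lt_cN.le, le_rfl⟩
    exact absurd (hss h1 h2) P.c0_lt_cN.ne
  | append_singleton w i ih =>
    intro hvalid hne hss
    obtain ⟨h1, h2⟩ : 1 ≤ i ∧ i ≤ P.N := hvalid i (by simp)
    have hwvalid : ∀ j ∈ w, 1 ≤ j ∧ j ≤ P.N := fun j hj => hvalid j (by simp [hj])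
    rw [P.atomOf_concat] at hne hss
    have hSne : (P.atomOf w ∩ P.piece i).Nonempty := by
      by_contra h
      rw [Set.not_nonempty_iff_eq_empty] at h
      unfold Fmap at hne
      rw [h] at hne
      simp at hne
    have hwne : (P.atomOf w).Nonempty := ⟨hSne.choose, hSne.choose_spec.1⟩
    -- the base set is a subsingleton, by injectivity
    have hSss : (P.atomOf w ∩ P.piece i).Subsingleton := by
      intro z1 hz1 z2 hz2
      apply hinj i h1 h2 hz1.2 hz2.2
      have him : ∀ z ∈ P.atomOf w ∩ P.piece i, P.f z ∈ P.Fmap i (P.atomOf w) :=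
        fun z hz => subset_closure ⟨z, hz, rfl⟩
      exact hss (him z1 hz1) (him z2 hz2)
    obtain ⟨z, hz⟩ := hSne
    have hSeq : P.atomOf w ∩ P.piece i = {z} := hSss.eq_singleton_of_mem hz
    -- interval representation of atomOf w
    obtain ⟨a, b, hab, hIcc, hsub⟩ := P.atom_interval hinj w hwvalid hwne
    have haX : a ∈ P.X := hsub ⟨le_rfl, hab⟩
    have hbX : b ∈ P.X := hsub ⟨hab, le_rfl⟩
    obtain ⟨hclos, huv⟩ := P.closure_inter_piece h1 h2 hab (hIcc ▸ ⟨z, hz⟩)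
    rw [hIcc] at hSeq
    rw [hSeq] at hclos
    simp only [closure_singleton] at hclos
    have hu_eq : max a (P.c (i - 1)) = z ∧ min b (P.c i) = z := by
      have h1' : max a (P.c (i - 1)) ∈ ({z} : Set ℝ) := by
        rw [hclos]; exact ⟨le_rfl, huv⟩
      have h2' : min b (P.c i) ∈ ({z} : Set ℝ) := by
        rw [hclos]; exact ⟨huv, le_rfl⟩
      exact ⟨h1', h2'⟩
    obtain ⟨hu_z, hv_z⟩ := hu_eq
    have hzmem : z ∈ Set.Icc a b ∩ P.piece i := by rw [hSeq]; exact rfl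
    have hab_eq : a = b := by
      rcases hzmem.2 with (hzp | hzp) | hzp
      · -- z interior
        have ha_z : a = z := by
          rcases max_choice a (P.c (i - 1)) with h | h
          · rw [← hu_z, h]
          · exfalso; rw [h] at hu_z; exact absurd hu_z hzp.1.ne
        have hb_z : b = z := by
          rcases min_choice b (P.c i) with h | h
          · rw [← hv_z, h]
          · exfalso; rw [h] at hv_z; exact absurd hv_z hzp.2.ne'
        rw [ha_z, hb_z]
      · -- z = c 0, i = 1
        by_cases hcase : i = 1
        · rw [if_pos hcase] at hzp
          rcases hzp with rfl
          subst hcase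
          have hb_z : b = P.c 0 := by
            rcases min_choice b (P.c 1) with h | h
            · rw [← hv_z, h]
            · exfalso
              rw [h] at hv_z
              have : P.c 0 < P.c 1 := by
                have := P.c_lt le_rfl (by have := P.hN; omega)
                simpa using this
              exact absurd hv_z this.ne'
          have : P.c 0 ≤ a := haX.1
          have : a ≤ b := hab
          linarith [haX.1, hab, hb_z.le, hb_z.ge]
        · rw [if_neg hcase] at hzp; exact absurd hzp (Set.notMem_empty _)
      · -- z = c N, i = N
        by_cases hcase : i = P.N
        · rw [if_pos hcase] at hzp
          rcases hzp with rfl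
          subst hcase
          have ha_z : a = P.c P.N := by
            rcases max_choice a (P.c (P.N - 1)) with h | h
            · rw [← hu_z, h]
            · exfalso
              rw [h] at hu_z
              exact absurd hu_z (P.c_lt h1 h2).ne
          have : b ≤ P.c P.N := hbX.2
          linarith [hbX.2, hab, ha_z.le, ha_z.ge]
        · rw [if_neg hcase] at hzp; exact absurd hzp (Set.notMem_empty _)
    apply ih hwvalid hwne
    rw [hIcc, hab_eq]
    simp only [Set.Icc_self]
    exact Set.subsingleton_singleton

end PCIM


namespace PCIM

variable (P : PCIM)

lemma finite_words (N : ℕ) : ∀ n : ℕ, {w : List ℕ | w.length = n ∧ ∀ j ∈ w, 1 ≤ j ∧ j ≤ N}.Finite := by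
  intro n
  induction n with
  | zero =>
    apply Set.Finite.subset (Set.finite_singleton ([] : List ℕ))
    intro w ⟨hl, _⟩
    rw [List.length_eq_zero_iff] at hl
    simp [hl]
  | succ n ih =>
    have hsub : {w : List ℕ | w.length = n + 1 ∧ ∀ j ∈ w, 1 ≤ j ∧ j ≤ N}
        ⊆ Set.image2 List.cons {j : ℕ | j ≤ N} {w : List ℕ | w.length = n ∧ ∀ j ∈ w, 1 ≤ j ∧ j ≤ N} := by
      rintro w ⟨hl, hv⟩
      rcases w with _ | ⟨j, t⟩
      · simp at hl
      · refine ⟨j, (hv j (by simp)).2, t, ⟨by simpa using hl, fun x hx => hv x (by simp [hx])⟩, rfl⟩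
    exact ((Set.finite_Iic N).image2 _ ih).subset hsub

lemma isClosed_atom (w : List ℕ) : IsClosed (P.atomOf w) := by
  rcases List.eq_nil_or_concat w with rfl | ⟨t, i, rfl⟩
  · exact P.isClosed_X
  · rw [List.concat_eq_append, P.atomOf_concat]
    exact isClosed_closure

lemma Lam_subset_X : ∀ n, P.Lam n ⊆ P.X := by
  intro n
  induction n with
  | zero =>
    apply closure_minimal _ P.isClosed_X
    rintro _ ⟨y, hy, rfl⟩
    exact P.hmap hy.1
  | succ n ih =>
    apply closure_minimal _ P.isClosed_X
    rintro _ ⟨y, hy, rfl⟩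
    exact P.hmap (ih hy.1)

lemma mem_piece_of_mem_X {z : ℝ} (hz : z ∈ P.X \ P.Δ) :
    ∃ i, 1 ≤ i ∧ i ≤ P.N ∧ z ∈ P.piece i := by
  classical
  obtain ⟨⟨hz0, hzN⟩, hzΔ⟩ := hz
  have hN1 : 1 ≤ P.N := by have := P.hN; omega
  by_cases h0 : z = P.c 0
  · exact ⟨1, le_rfl, hN1, Or.inl (Or.inr (by rw [if_pos rfl]; exact h0))⟩
  by_cases hNcase : z = P.c P.N
  · exact ⟨P.N, hN1, le_rfl, Or.inr (by rw [if_pos rfl]; exact hNcase)⟩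
  have hz0' : P.c 0 < z := lt_of_le_of_ne hz0 (Ne.symm h0)
  have hzN' : z < P.c P.N := lt_of_le_of_ne hzN hNcase
  have hEx : ∃ i, z ≤ P.c i ∧ i ≤ P.N := ⟨P.N, hzN'.le, le_rfl⟩
  classical
  let i0 := Nat.find hEx
  have hi0 : z ≤ P.c i0 ∧ i0 ≤ P.N := Nat.find_spec hEx
  have hi0pos : 1 ≤ i0 := by
    by_contra h
    push_neg at h
    have h0' : i0 = 0 := by omega
    have hz' : z ≤ P.c 0 := by rw [← h0']; exact hi0.1
    linarith
  have hprev : ¬ (z ≤ P.c (i0 - 1) ∧ i0 - 1 ≤ P.N) := Nat.find_min hEx (by omega)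
  have hprev' : P.c (i0 - 1) < z := by
    push_neg at hprev
    by_contra h
    push_neg at h
    exact absurd (hprev h) (by omega)
  have hzlt : z < P.c i0 := by
    rcases lt_or_eq_of_le hi0.1 with h | h
    · exact h
    · exfalso
      rcases lt_or_eq_of_le hi0.2 with hlt | heq
      · exact hzΔ ⟨i0, hi0pos, hlt, h⟩
      · rw [heq] at h; exact hNcase h
  exact ⟨i0, hi0pos, hi0.2, P.Ioo_subset_piece ⟨hprev', hzlt⟩⟩

lemma Lam_subset_atoms : ∀ n, P.Lam n ⊆
    ⋃ w ∈ {w : List ℕ | w.length = n + 1 ∧ ∀ j ∈ w, 1 ≤ j ∧ j ≤ P.N}, P.atomOf w := by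
  intro n
  have hclosed : ∀ m, IsClosed (⋃ w ∈ {w : List ℕ | w.length = m ∧ ∀ j ∈ w, 1 ≤ j ∧ j ≤ P.N}, P.atomOf w) :=
    fun m => (finite_words P.N m).isClosed_biUnion (fun w _ => P.isClosed_atom w)
  induction n with
  | zero =>
    apply closure_minimal _ (hclosed 1)
    rintro _ ⟨y, hy, rfl⟩
    obtain ⟨i, h1, h2, hpi⟩ := P.mem_piece_of_mem_X hy
    have hmemw : [i] ∈ {w : List ℕ | w.length = 0 + 1 ∧ ∀ j ∈ w, 1 ≤ j ∧ j ≤ P.N} := by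
      refine ⟨by simp, ?_⟩
      intro j hj
      rw [List.mem_singleton] at hj
      subst hj
      exact ⟨h1, h2⟩
    apply Set.mem_biUnion hmemw
    show P.f y ∈ P.atomOf [i]
    have hA : P.atomOf [i] = P.Fmap i P.X := rfl
    rw [hA]
    exact subset_closure ⟨y, ⟨hy.1, hpi⟩, rfl⟩
  | succ n ih =>
    apply closure_minimal _ (hclosed (n + 2))
    rintro _ ⟨y, hy, rfl⟩
    obtain ⟨hyL, hyΔ⟩ := hy
    obtain ⟨w, hw, hyw⟩ := Set.mem_iUnion₂.1 (ih hyL)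
    obtain ⟨i, h1, h2, hpi⟩ := P.mem_piece_of_mem_X ⟨P.Lam_subset_X n hyL, hyΔ⟩
    have hmemw : w ++ [i] ∈ {w : List ℕ | w.length = n + 1 + 1 ∧ ∀ j ∈ w, 1 ≤ j ∧ j ≤ P.N} := by
      refine ⟨by simp [hw.1], ?_⟩
      intro j hj
      rcases List.mem_append.1 hj with h | h
      · exact hw.2 j h
      · rw [List.mem_singleton] at h
        subst h
        exact ⟨h1, h2⟩
    apply Set.mem_biUnion hmemw
    rw [P.atomOf_concat]
    exact subset_closure ⟨y, ⟨hyw, hpi⟩, rfl⟩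

lemma D_finite : P.D.Finite := by
  have h1 : P.Dminus ⊆ (fun i => P.dminus i) '' (Set.Iio P.N) := by
    rintro y ⟨i, hi1, hi2, rfl⟩
    exact ⟨i, hi2, rfl⟩
  have h2 : P.Dplus ⊆ (fun i => P.dplus i) '' (Set.Iio P.N) := by
    rintro y ⟨i, hi1, hi2, rfl⟩
    exact ⟨i, hi2, rfl⟩
  have hf1 : P.Dminus.Finite := (((Set.finite_Iio P.N).image _)).subset h1
  have hf2 : P.Dplus.Finite := (((Set.finite_Iio P.N).image _)).subset h2
  exact (hf1.union hf2).union ((Set.finite_singleton _).insert _)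

lemma omega_subset_attractor (hD : P.D ⊆ P.Xt) {d : ℝ} (hd : d ∈ P.D) :
    P.omega d ⊆ P.attractor := by
  intro x hx
  obtain ⟨φ, hφ, hlim⟩ := hx
  have hXt := hD hd
  have key : ∀ n m, n < m → P.f^[m] d ∈ P.Lam n := by
    intro n
    induction n with
    | zero =>
      intro m hm
      obtain ⟨t, rfl⟩ : ∃ t, m = t + 1 := ⟨m - 1, by omega⟩
      rw [Function.iterate_succ_apply']
      exact subset_closure ⟨P.f^[t] d, hXt t, rfl⟩
    | succ n ih =>
      intro m hm
      obtain ⟨t, rfl⟩ : ∃ t, m = t + 1 := ⟨m - 1, by omega⟩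
      rw [Function.iterate_succ_apply']
      exact subset_closure ⟨P.f^[t] d, ⟨ih t (by omega), (hXt t).2⟩, rfl⟩
  apply Set.mem_iInter.2
  intro n
  have hclosed : IsClosed (P.Lam n) := by
    rcases n with _ | n <;> exact isClosed_closure
  apply hclosed.mem_of_tendsto hlim
  filter_upwards [Filter.eventually_ge_atTop (n + 1)] with j hj
  exact key n (φ j) (lt_of_lt_of_le (Nat.lt_of_lt_of_le (Nat.lt_succ_self n) hj) hφ.le_apply)

lemma eventually_eq_of_mem_finite {s : ℕ → ℝ} {V : Set ℝ} (hV : V.Finite)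
    (hmem : ∀ n, s n ∈ V) {x : ℝ} (hs : Filter.Tendsto s Filter.atTop (nhds x)) :
    ∀ᶠ n in Filter.atTop, s n = x := by
  have hcl : IsClosed (V \ {x}) := (hV.subset Set.diff_subset).isClosed
  have hop : (V \ {x})ᶜ ∈ nhds x := hcl.isOpen_compl.mem_nhds (by simp)
  filter_upwards [hs.eventually (Filter.eventually_of_mem hop (fun y hy => hy))] with n hn
  by_contra hne
  exact hn ⟨hmem n, hne⟩

lemma omega_of_unbounded {x : ℝ} {s : ℕ → ℝ} {dd : ℕ → ℝ} {kk : ℕ → ℕ}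
    (hdd : ∀ n, dd n ∈ P.D) (hs : ∀ n, s n = P.f^[kk n] (dd n)) (hkk : ∀ n, kk n ≤ n)
    (hx : Filter.Tendsto s Filter.atTop (nhds x)) (hub : ∀ K, ∃ n, K ≤ kk n) :
    ∃ d ∈ P.D, x ∈ P.omega d := by
  have hDfin := P.D_finite
  have key : ∃ d ∈ P.D, ∀ K, ∃ n, dd n = d ∧ K ≤ kk n := by
    by_contra h
    push_neg at h
    choose! Kf hKf using h
    obtain ⟨n, hn⟩ := hub (hDfin.toFinset.sup Kf + 1)
    have hb1 := hKf (dd n) (hdd n) n rfl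
    have hb2 : Kf (dd n) ≤ hDfin.toFinset.sup Kf :=
      Finset.le_sup (hDfin.mem_toFinset.2 (hdd n))
    omega
  obtain ⟨d, hd, hkey⟩ := key
  choose g hg1 hg2 using hkey
  let ψ : ℕ → ℕ := fun j => Nat.rec (g 0) (fun _ prev => g (max prev (kk prev) + 1)) j
  have hψ_succ : ∀ j, ψ (j + 1) = g (max (ψ j) (kk (ψ j)) + 1) := fun j => rfl
  have hψd : ∀ j, dd (ψ j) = d := by
    intro j
    rcases j with _ | j
    · exact hg1 0
    · rw [hψ_succ]; exact hg1 _
  have hmono_n : ∀ j, ψ j < ψ (j + 1) := by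
    intro j
    rw [hψ_succ]
    have h2 := hg2 (max (ψ j) (kk (ψ j)) + 1)
    have h3 := hkk (g (max (ψ j) (kk (ψ j)) + 1))
    omega
  have hkmono : ∀ j, kk (ψ j) < kk (ψ (j + 1)) := by
    intro j
    rw [hψ_succ]
    have h2 := hg2 (max (ψ j) (kk (ψ j)) + 1)
    omega
  have hψmono : StrictMono ψ := strictMono_nat_of_lt_succ hmono_n
  refine ⟨d, hd, kk ∘ ψ, strictMono_nat_of_lt_succ hkmono, ?_⟩
  have htend : Filter.Tendsto (fun j => s (ψ j)) Filter.atTop (nhds x) :=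
    hx.comp hψmono.tendsto_atTop
  have heq : (fun j => P.f^[(kk ∘ ψ) j] d) = fun j => s (ψ j) := by
    funext j
    rw [Function.comp_apply, hs (ψ j), hψd j]
  rw [heq]
  exact htend

end PCIM

/-- If `f` is injective on each piece and `D ⊆ X̃`, the attractor equals the union of
the ω-limit sets of the points of `D`. -/
theorem stmt5 (P : PCIM) (hinj : P.InjPieces) (hD : P.D ⊆ P.Xt) :
    P.attractor = ⋃ d ∈ P.D, P.omega d := by
  have hDfin := P.D_finite
  apply Set.Subset.antisymm
  · -- attractor ⊆ union of omega limit sets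
    intro x hx
    have hxn : ∀ n, x ∈ P.Lam n := fun n => Set.mem_iInter.1 hx n
    have H : ∀ n : ℕ, ∃ (w : List ℕ) (a b de dl : ℝ) (k l : ℕ),
        (∀ j ∈ w, 1 ≤ j ∧ j ≤ P.N) ∧ w.length = n + 1 ∧ P.atomOf w = Set.Icc a b ∧
        a ≤ x ∧ x ≤ b ∧ b - a ≤ P.lam ^ (n + 1) * (P.c P.N - P.c 0) ∧
        de ∈ P.D ∧ dl ∈ P.D ∧ k ≤ n ∧ l ≤ n ∧ a = P.f^[k] de ∧ b = P.f^[l] dl := by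
      intro n
      obtain ⟨w, hw, hxw⟩ := Set.mem_iUnion₂.1 (P.Lam_subset_atoms n (hxn n))
      obtain ⟨a, b, hIcc, hab, hsub, hdiam, ⟨de, hde, k, hk, ha⟩, ⟨dl, hdl, l, hl, hb⟩⟩ :=
        P.atom_inv hinj w hw.2 ⟨x, hxw⟩ (by rw [hw.1]; omega)
      rw [hw.1] at hdiam hk hl
      rw [hIcc] at hxw
      exact ⟨w, a, b, de, dl, k, l, hw.2, hw.1, hIcc, hxw.1, hxw.2, hdiam,
        hde, hdl, by omega, by omega, ha, hb⟩
    choose w a b de dl k l hv hlen hIcc hax hxb hdiam hde hdl hk hl ha hb using H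
    -- convergence of the endpoint sequences
    have hC : Filter.Tendsto (fun n : ℕ => P.lam ^ (n + 1) * (P.c P.N - P.c 0))
        Filter.atTop (nhds 0) := by
      have h0 : Filter.Tendsto (fun n : ℕ => P.lam ^ n) Filter.atTop (nhds 0) :=
        tendsto_pow_atTop_nhds_zero_of_lt_one P.lam_pos.le P.lam_lt_one
      have h1 : Filter.Tendsto (fun n : ℕ => P.lam ^ (n + 1)) Filter.atTop (nhds 0) :=
        h0.comp (Filter.tendsto_add_atTop_nat 1)
      simpa using h1.mul_const (P.c P.N - P.c 0)
    have hconva : Filter.Tendsto a Filter.atTop (nhds x) := by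
      have hlow : ∀ n, x - P.lam ^ (n + 1) * (P.c P.N - P.c 0) ≤ a n := by
        intro n
        have := hdiam n
        have := hax n
        have := hxb n
        linarith
      have hup : ∀ n, a n ≤ x := hax
      have hl1 : Filter.Tendsto (fun n : ℕ => x - P.lam ^ (n + 1) * (P.c P.N - P.c 0))
          Filter.atTop (nhds x) := by
        simpa using (tendsto_const_nhds (x := x) (f := (Filter.atTop : Filter ℕ))).sub hC
      exact tendsto_of_tendsto_of_tendsto_of_le_of_le hl1 tendsto_const_nhds hlow hup
    have hconvb : Filter.Tendsto b Filter.atTop (nhds x) := by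
      have hup : ∀ n, b n ≤ x + P.lam ^ (n + 1) * (P.c P.N - P.c 0) := by
        intro n
        have := hdiam n
        have := hax n
        have := hxb n
        linarith
      have hl1 : Filter.Tendsto (fun n : ℕ => x + P.lam ^ (n + 1) * (P.c P.N - P.c 0))
          Filter.atTop (nhds x) := by
        simpa using (tendsto_const_nhds (x := x) (f := (Filter.atTop : Filter ℕ))).add hC
      exact tendsto_of_tendsto_of_tendsto_of_le_of_le tendsto_const_nhds hl1 hxb hup
    by_cases hka : ∀ K, ∃ n, K ≤ k n
    · obtain ⟨d, hd, hxo⟩ := P.omega_of_unbounded hde (fun n => ha n) hk hconva hka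
      exact Set.mem_iUnion₂.2 ⟨d, hd, hxo⟩
    by_cases hkb : ∀ K, ∃ n, K ≤ l n
    · obtain ⟨d, hd, hxo⟩ := P.omega_of_unbounded hdl (fun n => hb n) hl hconvb hkb
      exact Set.mem_iUnion₂.2 ⟨d, hd, hxo⟩
    -- both endpoint iteration indices bounded : contradiction
    exfalso
    push_neg at hka hkb
    obtain ⟨Ka, hKa⟩ := hka
    obtain ⟨Kb, hKb⟩ := hkb
    set V : Set ℝ := (fun p : ℝ × ℕ => P.f^[p.2] p.1) '' (P.D ×ˢ Set.Iio (max Ka Kb)) with hV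
    have hVfin : V.Finite := ((hDfin.prod (Set.finite_Iio _)).image _)
    have hmema : ∀ n, a n ∈ V := fun n =>
      ⟨(de n, k n), ⟨hde n, lt_of_lt_of_le (hKa n) (le_max_left _ _)⟩, (ha n).symm⟩
    have hmemb : ∀ n, b n ∈ V := fun n =>
      ⟨(dl n, l n), ⟨hdl n, lt_of_lt_of_le (hKb n) (le_max_right _ _)⟩, (hb n).symm⟩
    have ea := PCIM.eventually_eq_of_mem_finite hVfin hmema hconva
    have eb := PCIM.eventually_eq_of_mem_finite hVfin hmemb hconvb
    obtain ⟨n, hna, hnb⟩ := (ea.and eb).exists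
    apply P.atom_not_subsingleton hinj (w n) (hv n)
      ⟨x, by rw [hIcc n]; exact ⟨hax n, hxb n⟩⟩
    rw [hIcc n, hna, hnb, Set.Icc_self]
    exact Set.subsingleton_singleton
  · exact Set.iUnion₂_subset fun d hd => P.omega_subset_attractor hD hd
end
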